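/- arXiv:2501.12126 — 4 statements merged into one kernel-verified Lean document; each statement's English description precedes it below -/
import Mathlib

section
/- Let (A,≻,≺) be an anti-dendriform algebra. Then the operation x·y := x≻y + x≺y makes (A,·) an associative algebra. -/
def IsLin (k : Type*) [Field k] {V W : Type*} [AddCommGroup V] [Module k V]
    [AddCommGroup W] [Module k W] (f : V → W) : Prop :=
  ∀ (c : k) (u v : V), f (c • u + v) = c • f u + f v

def IsBilin (k : Type*) [Field k] {U V W : Type*} [AddCommGroup U] [Module k U]
    [AddCommGroup V] [Module k V] [AddCommGroup W] [Module k W]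
    (f : U → V → W) : Prop :=
  (∀ x, IsLin k (f x)) ∧ (∀ y, IsLin k (fun x => f x y))

/-- An anti-dendriform algebra structure given by two bilinear operations `s` (≻) and `p` (≺). -/
def IsADAlg (k : Type*) [Field k] {A : Type*} [AddCommGroup A] [Module k A]
    (s p : A → A → A) : Prop :=
  IsBilin k s ∧ IsBilin k p ∧
  (∀ x y z, s x (s y z) = - s (s x y + p x y) z) ∧
  (∀ x y z, s x (s y z) = - p x (s y z + p y z)) ∧
  (∀ x y z, s x (s y z) = p (p x y) z) ∧
  (∀ x y z, p (s x y) z = s x (p y z))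

/-! Both `(x·y)·z` and `x·(y·z)` collapse to `x ≻ (y ≺ z)`: in each expansion the two terms
that are not of this shape are `±x ≻ (y ≻ z)` by the anti-dendriform axioms and cancel. -/

section

variable {k V W U : Type*} [Field k] [AddCommGroup U] [Module k U]
  [AddCommGroup V] [Module k V] [AddCommGroup W] [Module k W]

theorem IsLin.map_add {f : V → W} (hf : IsLin k f) (u v : V) : f (u + v) = f u + f v := by
  simpa using hf 1 u v

theorem IsBilin.map_add_right {f : U → V → W} (hf : IsBilin k f) (x : U) (u v : V) :
    f x (u + v) = f x u + f x v :=
  (hf.1 x).map_add u v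

theorem IsBilin.map_add_left {f : U → V → W} (hf : IsBilin k f) (u v : U) (y : V) :
    f (u + v) y = f u y + f v y :=
  (hf.2 y).map_add u v

end

namespace IsADAlg

variable {k A : Type*} [Field k] [AddCommGroup A] [Module k A] {s p : A → A → A}

theorem left_nested_eq (h : IsADAlg k s p) (x y z : A) :
    s (s x y + p x y) z + p (s x y + p x y) z = s x (p y z) := by
  obtain ⟨-, hp, hss, -, hpp, hsp⟩ := h
  rw [hp.map_add_left, hsp, ← hpp, hss x y z]
  abel

theorem right_nested_eq (h : IsADAlg k s p) (x y z : A) :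
    s x (s y z + p y z) + p x (s y z + p y z) = s x (p y z) := by
  obtain ⟨hs, -, -, hps, -, -⟩ := h
  rw [hs.map_add_right, hps x y z]
  abel

end IsADAlg

theorem stmt0 {k A : Type*} [Field k] [AddCommGroup A] [Module k A]
    (s p : A → A → A) (h : IsADAlg k s p) :
    ∀ x y z : A,
      s (s x y + p x y) z + p (s x y + p x y) z
        = s x (s y z + p y z) + p x (s y z + p y z) := by
  intro x y z
  rw [h.left_nested_eq, h.right_nested_eq]
end

section
/- Let (V, l_≻, r_≻, l_≺, r_≺) be a representation of an anti-dendriform algebra (A,≻,≺). Then (V, -l_≻, -r_≺) is a representation (bimodule) of the associated associative algebra (A,·), where x·y = x≻y + x≺y. -/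
/-- A representation of an anti-dendriform algebra `(A, s, p)` on `V`. -/
def IsADRep (k : Type*) [Field k] {A V : Type*} [AddCommGroup A] [Module k A]
    [AddCommGroup V] [Module k V]
    (s p : A → A → A) (ls rs lp rp : A → V → V) : Prop :=
  IsBilin k ls ∧ IsBilin k rs ∧ IsBilin k lp ∧ IsBilin k rp ∧
  (∀ x y v, ls x (ls y v) = - ls (s x y + p x y) v) ∧
  (∀ x y v, ls x (ls y v) = - lp x (ls y v + lp y v)) ∧
  (∀ x y v, ls x (ls y v) = lp (p x y) v) ∧
  (∀ x y v, rs (s x y) v = - rs y (rs x v + rp x v)) ∧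
  (∀ x y v, rs (s x y) v = - rp (s x y + p x y) v) ∧
  (∀ x y v, rs (s x y) v = rp y (rp x v)) ∧
  (∀ x y v, ls x (rs y v) = - rs y (ls x v + lp x v)) ∧
  (∀ x y v, ls x (rs y v) = - lp x (rs y v + rp y v)) ∧
  (∀ x y v, ls x (rs y v) = rp y (lp x v)) ∧
  (∀ x y v, lp (s x y) v = ls x (lp y v)) ∧
  (∀ x y v, rp y (rs x v) = rs (p x y) v) ∧
  (∀ x y v, rp y (ls x v) = ls x (rp y v))

/-- A representation (bimodule) of an associative algebra `(A, m)` on `V`. -/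
def IsAssocRep (k : Type*) [Field k] {A V : Type*} [AddCommGroup A] [Module k A]
    [AddCommGroup V] [Module k V]
    (m : A → A → A) (l r : A → V → V) : Prop :=
  IsBilin k l ∧ IsBilin k r ∧
  (∀ x y v, l (m x y) v = l x (l y v)) ∧
  (∀ x y v, r (m x y) v = r y (r x v)) ∧
  (∀ x y v, r y (l x v) = l x (r y v))

/-!
The bimodule axioms for `(-l_≻, -r_≺)` are read off from three of the representation
identities: `l_≻(x) l_≻(y) = -l_≻(x·y)`, `r_≺(y) r_≺(x) = r_≻(x≻y) = -r_≺(x·y)` and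
`r_≺(y) l_≻(x) = l_≻(x) r_≺(y)`; linearity of the operators absorbs the signs.
-/

namespace IsLin

variable {k V W : Type*} [Field k] [AddCommGroup V] [Module k V] [AddCommGroup W] [Module k W]
  {f : V → W}

theorem map_zero (hf : IsLin k f) : f 0 = 0 := by
  simpa using hf 1 0 0

theorem map_neg (hf : IsLin k f) (v : V) : f (-v) = -f v := by
  simpa [hf.map_zero] using hf (-1) v 0

theorem neg (hf : IsLin k f) : IsLin k (fun v => -f v) := by
  intro c u v
  simp only [hf c u v, neg_add, smul_neg]

end IsLin

theorem IsBilin.neg {k U V W : Type*} [Field k] [AddCommGroup U] [Module k U]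
    [AddCommGroup V] [Module k V] [AddCommGroup W] [Module k W] {f : U → V → W}
    (hf : IsBilin k f) : IsBilin k (fun x v => -f x v) :=
  ⟨fun x => (hf.1 x).neg, fun y => (hf.2 y).neg⟩

theorem stmt1_general {k A V : Type*} [Field k] [AddCommGroup A] [Module k A]
    [AddCommGroup V] [Module k V]
    (s p : A → A → A) (ls rs lp rp : A → V → V)
    (h : IsADRep k s p ls rs lp rp) :
    IsAssocRep k (fun x y => s x y + p x y)
      (fun x v => - ls x v) (fun x v => - rp x v) := by
  obtain ⟨hls, -, -, hrp, hls_ls, -, -, -, hrs_eq_rp_mul, hrs_eq_rp_rp, -, -, -, -, -,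
    hrp_ls_comm⟩ := h
  refine ⟨hls.neg, hrp.neg, fun x y v => ?_, fun x y v => ?_, fun x y v => ?_⟩
  · show -ls (s x y + p x y) v = -ls x (-ls y v)
    rw [(hls.1 x).map_neg, neg_neg, hls_ls]
  · show -rp (s x y + p x y) v = -rp y (-rp x v)
    rw [(hrp.1 y).map_neg, neg_neg, ← hrs_eq_rp_rp, hrs_eq_rp_mul]
  · show -rp y (-ls x v) = -ls x (-rp y v)
    rw [(hrp.1 y).map_neg, (hls.1 x).map_neg, hrp_ls_comm]

theorem stmt1 {k A V : Type*} [Field k] [AddCommGroup A] [Module k A]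
    [AddCommGroup V] [Module k V]
    (s p : A → A → A) (ls rs lp rp : A → V → V)
    (hA : IsADAlg k s p) (h : IsADRep k s p ls rs lp rp) :
    IsAssocRep k (fun x y => s x y + p x y)
      (fun x v => - ls x v) (fun x v => - rp x v) :=
  stmt1_general s p ls rs lp rp h
end

section
/- Let (A,≻,≺) be an anti-dendriform algebra and r ∈ A⊗A skew-symmetric. Then r is a solution of the anti-dendriform Yang-Baxter equation r₁₂·r₁₃ + r₂₃≻r₁₂ - r₁₃≺r₂₃ = 0 if and only if the linear map T_r: A* → A is an O-operator of the associated associative algebra (A,·) with respect to the representation (A*, -R_≺*, -L_≻*), i.e., T_r(u*)·T_r(v*) = T_r(-R_≺*(T_r(u*))v* - L_≻*(T_r(v*))u*) for all u*,v* ∈ A*. -/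
/-!
Pair the tensor with `u ⊗ v ⊗ w`. Each of its three terms becomes a value of `T_r` or of its
transpose `T_r^t w = ∑ i, w (b i) • a i`, and skew-symmetry of `r` says precisely `T_r^t = -T_r`;
after this substitution the pairing is `u` applied to the O-operator defect at `(v, w)`.
Elementary tensors of functionals separate the points of `A ⊗ (A ⊗ A)`, and functionals separate
the points of `A`, so one side vanishes identically iff the other does.
-/

open scoped TensorProduct

/-- An anti-dendriform algebra structure given by bundled bilinear operations
`s` (≻) and `p` (≺). -/
def IsADAlgL (k : Type*) [Field k] {A : Type*} [AddCommGroup A] [Module k A]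
    (s p : A →ₗ[k] A →ₗ[k] A) : Prop :=
  (∀ x y z, s x (s y z) = - s (s x y + p x y) z) ∧
  (∀ x y z, s x (s y z) = - p x (s y z + p y z)) ∧
  (∀ x y z, s x (s y z) = p (p x y) z) ∧
  (∀ x y z, p (s x y) z = s x (p y z))

/-- The linear map `A* → A` associated to `r = ∑ i, a i ⊗ b i`. -/
def Tmap (k : Type*) [Field k] {A : Type*} [AddCommGroup A] [Module k A]
    {ι : Type*} [Fintype ι] (a b : ι → A) (w : Module.Dual k A) : A :=
  ∑ i, w (a i) • b i

section TensorDual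

open TensorProduct Module

variable {R M N P : Type*} [CommRing R] [AddCommGroup M] [Module R M]
  [AddCommGroup N] [Module R N] [AddCommGroup P] [Module R P]

theorem Module.Basis.tensorProduct_repr_apply_eq_dualDistrib {ι κ : Type*}
    (b : Basis ι R M) (c : Basis κ R N) (x : M ⊗[R] N) (i : ι) (j : κ) :
    (b.tensorProduct c).repr x (i, j) = dualDistrib R M N (b.coord i ⊗ₜ c.coord j) x := by
  induction x using TensorProduct.induction_on with
  | zero => simp
  | tmul m n => simp [Basis.tensorProduct_repr_tmul_apply, mul_comm]
  | add x y hx hy => simp [hx, hy]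

theorem TensorProduct.eq_zero_iff_forall_dualDistrib_tmul_dualDistrib
    [Free R M] [Free R N] [Free R P] (x : M ⊗[R] (N ⊗[R] P)) :
    x = 0 ↔ ∀ f g h, dualDistrib R M (N ⊗[R] P) (f ⊗ₜ dualDistrib R N P (g ⊗ₜ h)) x = 0 := by
  refine ⟨by rintro rfl; simp, fun hx => ?_⟩
  let bM := Free.chooseBasis R M
  let bN := Free.chooseBasis R N
  let bP := Free.chooseBasis R P
  have hcoord : ∀ j l,
      (bN.tensorProduct bP).coord (j, l) = dualDistrib R N P (bN.coord j ⊗ₜ bP.coord l) :=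
    fun j l => LinearMap.ext fun y => bN.tensorProduct_repr_apply_eq_dualDistrib bP y j l
  refine (bM.tensorProduct (bN.tensorProduct bP)).ext_elem fun ⟨i, j, l⟩ => ?_
  rw [Basis.tensorProduct_repr_apply_eq_dualDistrib, hcoord, hx, map_zero, Finsupp.zero_apply]

end TensorDual

section OOperator

open TensorProduct Module

variable {k A : Type*} [Field k] [AddCommGroup A] [Module k A] {ι : Type*} [Fintype ι]

theorem dual_apply_tmap (a b : ι → A) (u φ : Dual k A) :
    u (Tmap k a b φ) = φ (Tmap k b a u) := by
  simp [Tmap, mul_comm]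

theorem tmap_swap_of_skew {a b : ι → A}
    (hskew : (∑ i, a i ⊗ₜ[k] b i : A ⊗[k] A) = - ∑ i, b i ⊗ₜ[k] a i) (w : Dual k A) :
    Tmap k b a w = - Tmap k a b w := by
  rw [eq_neg_iff_add_eq_zero, add_comm, ← eq_neg_iff_add_eq_zero]
  simpa [Tmap] using congrArg ((TensorProduct.lid k A).toLinearMap ∘ₗ map w LinearMap.id) hskew

theorem apply_tmap_tmap (β : A →ₗ[k] A →ₗ[k] k) (a b a' b' : ι → A) (f g : Dual k A) :
    β (Tmap k a b f) (Tmap k a' b' g) = ∑ i, ∑ j, f (a i) * g (a' j) * β (b i) (b' j) := by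
  simp only [Tmap, map_sum, map_smul, LinearMap.sum_apply, LinearMap.smul_apply, smul_eq_mul,
    Finset.mul_sum]
  rw [Finset.sum_comm]
  exact Finset.sum_congr rfl fun i _ => Finset.sum_congr rfl fun j _ => by ring

/-- `r₁₂·r₁₃ + r₂₃≻r₁₂ - r₁₃≺r₂₃` for `r = ∑ i, a i ⊗ b i`, with `s = ≻` and `p = ≺`. -/
def ybeTensor (s p : A →ₗ[k] A →ₗ[k] A) (a b : ι → A) : A ⊗[k] (A ⊗[k] A) :=
  (∑ i, ∑ j, (s (a i) (a j) + p (a i) (a j)) ⊗ₜ[k] (b i ⊗ₜ[k] b j))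
    + (∑ i, ∑ j, a j ⊗ₜ[k] (s (a i) (b j) ⊗ₜ[k] b i))
    - (∑ i, ∑ j, a i ⊗ₜ[k] (a j ⊗ₜ[k] p (b i) (b j)))

theorem dualDistrib_ybeTensor (s p : A →ₗ[k] A →ₗ[k] A) (a b : ι → A) (u v w : Dual k A) :
    dualDistrib k A (A ⊗[k] A) (u ⊗ₜ dualDistrib k A A (v ⊗ₜ w)) (ybeTensor s p a b)
      = u (s (Tmap k b a v) (Tmap k b a w) + p (Tmap k b a v) (Tmap k b a w))
        + v (s (Tmap k b a w) (Tmap k a b u)) - w (p (Tmap k a b u) (Tmap k a b v)) := by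
  rw [map_add, ← LinearMap.compr₂_apply s u, ← LinearMap.compr₂_apply p u,
    ← LinearMap.compr₂_apply s v, ← LinearMap.compr₂_apply p w]
  simp only [apply_tmap_tmap, LinearMap.compr₂_apply, ybeTensor, map_add, map_sub, map_sum,
    dualDistrib_apply, ← Finset.sum_add_distrib, ← Finset.sum_sub_distrib]
  exact Finset.sum_congr rfl fun i _ => Finset.sum_congr rfl fun j _ => by ring

theorem dualDistrib_ybeTensor_of_skew (s p : A →ₗ[k] A →ₗ[k] A) {a b : ι → A}
    (hskew : (∑ i, a i ⊗ₜ[k] b i : A ⊗[k] A) = - ∑ i, b i ⊗ₜ[k] a i) (u v w : Dual k A) :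
    dualDistrib k A (A ⊗[k] A) (u ⊗ₜ dualDistrib k A A (v ⊗ₜ w)) (ybeTensor s p a b)
      = u (s (Tmap k a b v) (Tmap k a b w) + p (Tmap k a b v) (Tmap k a b w)
          - Tmap k a b (-(w ∘ₗ p.flip (Tmap k a b v)) - v ∘ₗ s (Tmap k a b w))) := by
  rw [dualDistrib_ybeTensor, map_sub u, dual_apply_tmap]
  simp only [tmap_swap_of_skew hskew, map_neg, LinearMap.neg_apply, neg_neg, LinearMap.sub_apply,
    LinearMap.comp_apply, LinearMap.flip_apply]
  ring

end OOperator

theorem stmt10_general {k A : Type*} [Field k] [AddCommGroup A] [Module k A]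
    {ι : Type*} [Fintype ι]
    (s p : A →ₗ[k] A →ₗ[k] A) (a b : ι → A)
    (hskew : (∑ i, a i ⊗ₜ[k] b i : A ⊗[k] A) = - ∑ i, b i ⊗ₜ[k] a i) :
    -- r₁₂·r₁₃ + r₂₃≻r₁₂ - r₁₃≺r₂₃ = 0
    ((∑ i, ∑ j, (s (a i) (a j) + p (a i) (a j)) ⊗ₜ[k] (b i ⊗ₜ[k] b j))
      + (∑ i, ∑ j, a j ⊗ₜ[k] (s (a i) (b j) ⊗ₜ[k] b i))
      - (∑ i, ∑ j, a i ⊗ₜ[k] (a j ⊗ₜ[k] p (b i) (b j)))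
      = (0 : A ⊗[k] (A ⊗[k] A)))
    ↔
    -- T_r is an O-operator of (A,·) w.r.t. (A*, -R_≺*, -L_≻*)
    (∀ u v : Module.Dual k A,
      s (Tmap k a b u) (Tmap k a b v) + p (Tmap k a b u) (Tmap k a b v)
        = Tmap k a b (-(v ∘ₗ p.flip (Tmap k a b u)) - u ∘ₗ s (Tmap k a b v))) := by
  change ybeTensor s p a b = 0 ↔ _
  simp only [TensorProduct.eq_zero_iff_forall_dualDistrib_tmul_dualDistrib,
    dualDistrib_ybeTensor_of_skew s p hskew, ← sub_eq_zero (a := s _ _ + _),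
    ← Module.forall_dual_apply_eq_zero_iff k (s _ _ + _ - _)]
  exact ⟨fun h v w u => h u v w, fun h u v w => h v w u⟩

theorem stmt10 {k A : Type*} [Field k] [AddCommGroup A] [Module k A]
    [FiniteDimensional k A] {ι : Type*} [Fintype ι]
    (s p : A →ₗ[k] A →ₗ[k] A) (hA : IsADAlgL k s p) (a b : ι → A)
    (hskew : (∑ i, a i ⊗ₜ[k] b i : A ⊗[k] A) = - ∑ i, b i ⊗ₜ[k] a i) :
    -- r₁₂·r₁₃ + r₂₃≻r₁₂ - r₁₃≺r₂₃ = 0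
    ((∑ i, ∑ j, (s (a i) (a j) + p (a i) (a j)) ⊗ₜ[k] (b i ⊗ₜ[k] b j))
      + (∑ i, ∑ j, a j ⊗ₜ[k] (s (a i) (b j) ⊗ₜ[k] b i))
      - (∑ i, ∑ j, a i ⊗ₜ[k] (a j ⊗ₜ[k] p (b i) (b j)))
      = (0 : A ⊗[k] (A ⊗[k] A)))
    ↔
    -- T_r is an O-operator of (A,·) w.r.t. (A*, -R_≺*, -L_≻*)
    (∀ u v : Module.Dual k A,
      s (Tmap k a b u) (Tmap k a b v) + p (Tmap k a b u) (Tmap k a b v)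
        = Tmap k a b (-(v ∘ₗ p.flip (Tmap k a b u)) - u ∘ₗ s (Tmap k a b v))) :=
  stmt10_general s p a b hskew
end

section
/- Let (A,≻,≺) be an anti-dendriform algebra and Δ_≻, Δ_≺: A → A⊗A defined by Δ_≻(x) = -(R_≺(x)⊗I + I⊗L_·(x))r_≻ and Δ_≺(x) = (R_·(x)⊗I + I⊗L_≻(x))r_≺ for r_≻, r_≺ ∈ A⊗A. Then the compatibility condition Δ_≺(x·y) = (R_·(y)⊗I)Δ_≺(x) - (I⊗L_≻(x))Δ_≺(y) holds automatically for all x,y ∈ A. -/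
/-!
The product `x·y = x≻y + x≺y` of an anti-dendriform algebra is associative, and
`(x·y)≻z = -x≻(y≻z)`. Expanding both sides over `r_≺ = ∑ i, a i ⊗ b i`, the cross terms
`(a i·y) ⊗ (x≻b i)` cancel on the right, and the remaining terms match the left side by
these two identities.
-/

open scoped TensorProduct

/-- The coboundary comultiplication Δ_≻(x) = -(R_≺(x)⊗I + I⊗L_·(x)) r for
`r = ∑ i, a i ⊗ b i`. -/
noncomputable def Dsucc (k : Type*) [Field k] {A : Type*} [AddCommGroup A] [Module k A]
    {ι : Type*} [Fintype ι] (s p : A →ₗ[k] A →ₗ[k] A) (a b : ι → A) :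
    A →ₗ[k] A ⊗[k] A :=
  - ∑ i, (((TensorProduct.mk k A A).flip (b i)) ∘ₗ (p (a i))
      + (TensorProduct.mk k A A (a i)) ∘ₗ ((s + p).flip (b i)))

/-- The coboundary comultiplication Δ_≺(x) = (R_·(x)⊗I + I⊗L_≻(x)) r for
`r = ∑ i, a i ⊗ b i`. -/
noncomputable def Dprec (k : Type*) [Field k] {A : Type*} [AddCommGroup A] [Module k A]
    {ι : Type*} [Fintype ι] (s p : A →ₗ[k] A →ₗ[k] A) (a b : ι → A) :
    A →ₗ[k] A ⊗[k] A :=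
  ∑ i, (((TensorProduct.mk k A A).flip (b i)) ∘ₗ ((s + p) (a i))
      + (TensorProduct.mk k A A (a i)) ∘ₗ (s.flip (b i)))

namespace IsADAlgL

variable {k A : Type*} [Field k] [AddCommGroup A] [Module k A] {s p : A →ₗ[k] A →ₗ[k] A}

theorem add_apply_assoc (hA : IsADAlgL k s p) (x y z : A) :
    (s + p) x ((s + p) y z) = (s + p) ((s + p) x y) z := by
  obtain ⟨h₁, h₂, h₃, h₄⟩ := hA
  simp only [LinearMap.add_apply, map_add] at h₁ h₂ ⊢
  linear_combination (norm := module) h₂ x y z - h₁ x y z + h₃ x y z - h₄ x y z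

theorem apply_add_apply (hA : IsADAlgL k s p) (x y z : A) :
    s ((s + p) x y) z = - s x (s y z) := by
  rw [hA.1, neg_neg, LinearMap.add_apply, LinearMap.add_apply]

end IsADAlgL

theorem Dprec_apply {k A : Type*} [Field k] [AddCommGroup A] [Module k A]
    {ι : Type*} [Fintype ι] (s p : A →ₗ[k] A →ₗ[k] A) (a b : ι → A) (x : A) :
    Dprec k s p a b x = ∑ i, ((s + p) (a i) x ⊗ₜ b i + a i ⊗ₜ s x (b i)) := by
  simp only [Dprec, LinearMap.sum_apply, LinearMap.add_apply, LinearMap.comp_apply,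
    TensorProduct.mk_apply, LinearMap.flip_apply]

theorem stmt17_general {k A : Type*} [Field k] [AddCommGroup A] [Module k A]
    {κ : Type*} [Fintype κ]
    (s p : A →ₗ[k] A →ₗ[k] A) (hA : IsADAlgL k s p)
    (ap bp : κ → A) :
    -- (D1) holds automatically for Δ_≺ built from r_≺ = ∑ i, ap i ⊗ bp i
    ∀ x y, Dprec k s p ap bp ((s + p) x y)
      = (LinearMap.rTensor A ((s + p).flip y)) (Dprec k s p ap bp x)
        - (LinearMap.lTensor A (s x)) (Dprec k s p ap bp y) := by
  intro x y
  simp only [Dprec_apply, map_sum, map_add, LinearMap.rTensor_tmul, LinearMap.lTensor_tmul,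
    LinearMap.flip_apply, ← Finset.sum_sub_distrib, hA.add_apply_assoc, hA.apply_add_apply,
    TensorProduct.tmul_neg]
  refine Finset.sum_congr rfl fun i _ => ?_
  abel

theorem stmt17 {k A : Type*} [Field k] [AddCommGroup A] [Module k A]
    {ι κ : Type*} [Fintype ι] [Fintype κ]
    (s p : A →ₗ[k] A →ₗ[k] A) (hA : IsADAlgL k s p)
    (as bs : ι → A) (ap bp : κ → A) :
    -- (D1) holds automatically for Δ_≺ built from r_≺ = ∑ i, ap i ⊗ bp i
    ∀ x y, Dprec k s p ap bp ((s + p) x y)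
      = (LinearMap.rTensor A ((s + p).flip y)) (Dprec k s p ap bp x)
        - (LinearMap.lTensor A (s x)) (Dprec k s p ap bp y) :=
  stmt17_general s p hA ap bp
end
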